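/- Let α > 0, δ > 0 and μ a nonnegative Borel measure on ℂⁿ. Then sup_{z∈ℂⁿ} μ(D(z,δ)) < ∞ if and only if sup_{z∈ℂⁿ} ∫_{ℂⁿ} e^{−α|z−w|²} dμ(w) < ∞; moreover the two suprema are comparable up to constants depending only on n, α, δ. -/

import Mathlib

/-!
On `D(z, δ)` the kernel `e^{-α|z-w|²}` is at least `e^{-αδ²}`, which bounds `μ(D(z, δ))` by
`e^{αδ²}` times the Berezin transform. For the converse, rather than covering `ℂⁿ` by a lattice of
balls, we average over balls: whenever `|w - x| < δ`,
`e^{-α|z-w|²} ≤ e^{αδ²} e^{-(α/2)|z-x|²}`, so integrating in `x` over `D(w, δ)`, then in `w`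
against `μ`, and exchanging the integrals,
`|D(0, δ)| ∫ e^{-α|z-w|²} dμ(w) ≤ e^{αδ²} ∫ e^{-(α/2)|z-x|²} μ(D(x, δ)) dx
  ≤ e^{αδ²} ‖e^{-(α/2)|·|²}‖₁ sup_x μ(D(x, δ))`.
Tonelli needs `μ` to be σ-finite, which holds as soon as `sup_x μ(D(x, δ)) < ∞`.
-/

open MeasureTheory Metric
open scoped ComplexInnerProductSpace NNReal ENNReal

noncomputable instance EuclideanSpace.Complex.measurableSpace (n : ℕ) :
    MeasurableSpace (EuclideanSpace ℂ (Fin n)) := borel _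

instance EuclideanSpace.Complex.borelSpace (n : ℕ) :
    BorelSpace (EuclideanSpace ℂ (Fin n)) := ⟨rfl⟩

/-- Lebesgue measure on `ℂⁿ ≅ ℝ^{2n}`, transported to `EuclideanSpace ℂ (Fin n)`. -/
noncomputable instance EuclideanSpace.Complex.measureSpace (n : ℕ) :
    MeasureSpace (EuclideanSpace ℂ (Fin n)) :=
  ⟨Measure.map
    ((PiLp.continuousLinearEquiv 2 ℂ (fun _ : Fin n => ℂ)).symm.toHomeomorph.toMeasurableEquiv)
    volume⟩

instance EuclideanSpace.Complex.isAddHaarMeasure (n : ℕ) :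
    (volume : Measure (EuclideanSpace ℂ (Fin n))).IsAddHaarMeasure :=
  (PiLp.continuousLinearEquiv 2 ℂ (fun _ : Fin n => ℂ)).symm.isAddHaarMeasure_map volume

theorem integrable_exp_neg_mul_sq_norm {V : Type*} [NormedAddCommGroup V]
    [InnerProductSpace ℝ V] [FiniteDimensional ℝ V] [MeasurableSpace V] [BorelSpace V]
    (μ : Measure V) [μ.IsAddHaarMeasure] {b : ℝ} (hb : 0 < b) :
    Integrable (fun v : V => Real.exp (-b * ‖v‖ ^ 2)) μ := by
  have hvolume : Integrable (fun v : V => Real.exp (-b * ‖v‖ ^ 2)) := by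
    simpa [Complex.norm_exp, ← Complex.ofReal_pow] using
      (GaussianFourier.integrable_cexp_neg_mul_sq_norm_add (V := V) (b := b)
        (by simpa using hb) 0 0).norm
  rw [Measure.isAddLeftInvariant_eq_smul μ volume]
  exact hvolume.smul_measure ENNReal.coe_ne_top

theorem isLocallyFiniteMeasure_of_iSup_measure_ball_lt_top {X : Type*} [PseudoMetricSpace X]
    [MeasurableSpace X] {μ : Measure X} {δ : ℝ} (hδ : 0 < δ)
    (h : ⨆ x, μ (ball x δ) < ⊤) : IsLocallyFiniteMeasure μ :=
  ⟨fun x => ⟨ball x δ, ball_mem_nhds x hδ, (le_iSup (fun y => μ (ball y δ)) x).trans_lt h⟩⟩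

section NormedAddCommGroup

variable {E : Type*} [NormedAddCommGroup E]

theorem exp_neg_mul_norm_sub_sq_le {α δ : ℝ} (hα : 0 ≤ α) {z w x : E} (hwx : ‖w - x‖ ≤ δ) :
    Real.exp (-α * ‖z - w‖ ^ 2) ≤ Real.exp (α * δ ^ 2) * Real.exp (-(α / 2) * ‖z - x‖ ^ 2) := by
  have htri : ‖z - x‖ ≤ ‖z - w‖ + ‖w - x‖ := norm_sub_le_norm_sub_add_norm_sub z w x
  have hsq : ‖z - x‖ ^ 2 ≤ 2 * ‖z - w‖ ^ 2 + 2 * δ ^ 2 := by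
    nlinarith [norm_nonneg (z - x), norm_nonneg (w - x), sq_nonneg (‖z - w‖ - ‖w - x‖)]
  rw [← Real.exp_add]
  gcongr
  nlinarith [mul_le_mul_of_nonneg_left hsq hα]

variable [MeasurableSpace E]

theorem measure_ball_le_exp_mul_lintegral [OpensMeasurableSpace E] (μ : Measure E) {α : ℝ}
    (hα : 0 ≤ α) (z : E) (δ : ℝ) :
    μ (ball z δ) ≤ ENNReal.ofReal (Real.exp (α * δ ^ 2)) *
      ∫⁻ w, ENNReal.ofReal (Real.exp (-α * ‖z - w‖ ^ 2)) ∂μ := by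
  calc μ (ball z δ) = ∫⁻ _ in ball z δ, 1 ∂μ := (setLIntegral_one _).symm
    _ ≤ ∫⁻ w in ball z δ, ENNReal.ofReal (Real.exp (α * δ ^ 2)) *
          ENNReal.ofReal (Real.exp (-α * ‖z - w‖ ^ 2)) ∂μ := by
      refine setLIntegral_mono' measurableSet_ball fun w hw => ?_
      have hzw : ‖z - w‖ < δ := by rw [← dist_eq_norm]; exact mem_ball'.mp hw
      have hsq : ‖z - w‖ ^ 2 ≤ δ ^ 2 := pow_le_pow_left₀ (norm_nonneg _) hzw.le 2
      rw [← ENNReal.ofReal_mul (Real.exp_pos _).le, ← Real.exp_add, ENNReal.one_le_ofReal]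
      exact Real.one_le_exp (by nlinarith)
    _ ≤ ∫⁻ w, ENNReal.ofReal (Real.exp (α * δ ^ 2)) *
          ENNReal.ofReal (Real.exp (-α * ‖z - w‖ ^ 2)) ∂μ := setLIntegral_le_lintegral _ _
    _ = _ := lintegral_const_mul' _ _ ENNReal.ofReal_ne_top

theorem iSup_measure_ball_le_exp_mul_iSup_lintegral [OpensMeasurableSpace E] (μ : Measure E)
    {α : ℝ} (hα : 0 ≤ α) (δ : ℝ) :
    ⨆ z, μ (ball z δ) ≤ ENNReal.ofReal (Real.exp (α * δ ^ 2)) *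
      ⨆ z, ∫⁻ w, ENNReal.ofReal (Real.exp (-α * ‖z - w‖ ^ 2)) ∂μ := by
  rw [ENNReal.mul_iSup]
  exact iSup_mono fun z => measure_ball_le_exp_mul_lintegral μ hα z δ

theorem measure_ball_eq_of_isAddLeftInvariant [MeasurableAdd E] (ν : Measure E)
    [ν.IsAddLeftInvariant] (w : E) (δ : ℝ) : ν (ball w δ) = ν (ball 0 δ) := by
  rw [← measure_preimage_add ν w (ball w δ), preimage_add_ball, sub_self]

theorem lintegral_gaussian_mul_measure_ball_le [BorelSpace E] [SecondCountableTopology E]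
    (μ ν : Measure E) [SFinite μ] [SFinite ν] [ν.IsAddLeftInvariant] {α : ℝ} (hα : 0 ≤ α)
    (δ : ℝ) (z : E) :
    (∫⁻ w, ENNReal.ofReal (Real.exp (-α * ‖z - w‖ ^ 2)) ∂μ) * ν (ball 0 δ) ≤
      ENNReal.ofReal (Real.exp (α * δ ^ 2)) *
        (∫⁻ x, ENNReal.ofReal (Real.exp (-(α / 2) * ‖z - x‖ ^ 2)) ∂ν) * ⨆ x, μ (ball x δ) := by
  set K : E → ℝ≥0∞ := fun x =>
    ENNReal.ofReal (Real.exp (α * δ ^ 2)) * ENNReal.ofReal (Real.exp (-(α / 2) * ‖z - x‖ ^ 2))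
  have hK : Measurable K := by fun_prop
  have hmeas : AEMeasurable (Function.uncurry fun w x => (ball w δ).indicator K x) (μ.prod ν) := by
    have : Function.uncurry (fun w x => (ball w δ).indicator K x) =
        {p : E × E | dist p.2 p.1 < δ}.indicator (K ∘ Prod.snd) := by
      ext p; rfl
    rw [this]
    exact ((hK.comp measurable_snd).indicator
      (measurableSet_lt (by fun_prop) measurable_const)).aemeasurable
  calc (∫⁻ w, ENNReal.ofReal (Real.exp (-α * ‖z - w‖ ^ 2)) ∂μ) * ν (ball 0 δ)
      = ∫⁻ w, ∫⁻ _ in ball w δ, ENNReal.ofReal (Real.exp (-α * ‖z - w‖ ^ 2)) ∂ν ∂μ := by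
        rw [← lintegral_mul_const _ (by fun_prop)]
        simp_rw [setLIntegral_const, measure_ball_eq_of_isAddLeftInvariant ν _ δ]
    _ ≤ ∫⁻ w, ∫⁻ x, (ball w δ).indicator K x ∂ν ∂μ := by
        refine lintegral_mono fun w => ?_
        rw [lintegral_indicator measurableSet_ball]
        refine setLIntegral_mono' measurableSet_ball fun x hx => ?_
        have hwx : ‖w - x‖ ≤ δ := by rw [← dist_eq_norm]; exact (mem_ball'.mp hx).le
        exact (ENNReal.ofReal_le_ofReal (exp_neg_mul_norm_sub_sq_le hα hwx)).trans_eq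
          (ENNReal.ofReal_mul (Real.exp_pos _).le)
    _ = ∫⁻ x, ∫⁻ w, (ball x δ).indicator (fun _ => K x) w ∂μ ∂ν := by
        rw [lintegral_lintegral_swap hmeas]
        refine lintegral_congr fun x => lintegral_congr fun w => ?_
        by_cases h : x ∈ ball w δ
        · rw [Set.indicator_of_mem h, Set.indicator_of_mem (mem_ball_comm.mp h)]
        · rw [Set.indicator_of_notMem h, Set.indicator_of_notMem (mt mem_ball_comm.mp h)]
    _ = ∫⁻ x, K x * μ (ball x δ) ∂ν := by
        simp_rw [lintegral_indicator_const measurableSet_ball]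
    _ ≤ ∫⁻ x, K x * ⨆ y, μ (ball y δ) ∂ν := by
        gcongr with x
        exact le_iSup (fun y => μ (ball y δ)) x
    _ = _ := by
        rw [lintegral_mul_const _ hK, lintegral_const_mul' _ _ ENNReal.ofReal_ne_top]

end NormedAddCommGroup

theorem iSup_lintegral_gaussian_le {E : Type*} [NormedAddCommGroup E] [NormedSpace ℝ E]
    [FiniteDimensional ℝ E] [MeasurableSpace E] [BorelSpace E] (μ ν : Measure E) [SFinite μ]
    [ν.IsAddHaarMeasure] {α δ : ℝ} (hα : 0 ≤ α) (hδ : 0 < δ) :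
    ⨆ z, ∫⁻ w, ENNReal.ofReal (Real.exp (-α * ‖z - w‖ ^ 2)) ∂μ ≤
      ENNReal.ofReal (Real.exp (α * δ ^ 2)) *
        (∫⁻ x, ENNReal.ofReal (Real.exp (-(α / 2) * ‖x‖ ^ 2)) ∂ν) / ν (ball 0 δ) *
          ⨆ x, μ (ball x δ) := by
  refine iSup_le fun z => ?_
  have hcenter : ∫⁻ x, ENNReal.ofReal (Real.exp (-(α / 2) * ‖z - x‖ ^ 2)) ∂ν =
      ∫⁻ x, ENNReal.ofReal (Real.exp (-(α / 2) * ‖x‖ ^ 2)) ∂ν := by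
    simp_rw [norm_sub_rev z]
    exact lintegral_sub_right_eq_self (fun x => ENNReal.ofReal (Real.exp (-(α / 2) * ‖x‖ ^ 2))) z
  have hbound := lintegral_gaussian_mul_measure_ball_le μ ν hα δ z
  rw [hcenter] at hbound
  rw [← ENNReal.mul_div_right_comm, ENNReal.le_div_iff_mul_le
    (.inl (measure_ball_pos ν 0 hδ).ne') (.inl measure_ball_lt_top.ne)]
  exact hbound

/-- `sup_z μ(D(z,δ)) < ∞` iff `sup_z ∫ e^{−α|z−w|²} dμ(w) < ∞`, and the two suprema are
comparable with constants depending only on `n, α, δ`. -/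
theorem averaging_function_iff_berezin (n : ℕ) (α δ : ℝ) (hα : 0 < α) (hδ : 0 < δ) :
    ∃ c C : ℝ≥0, 0 < c ∧ 0 < C ∧
      ∀ μ : Measure (EuclideanSpace ℂ (Fin n)),
        ((⨆ z : EuclideanSpace ℂ (Fin n), μ (ball z δ)) < ⊤ ↔
          (⨆ z : EuclideanSpace ℂ (Fin n),
            ∫⁻ w, ENNReal.ofReal (Real.exp (-α * ‖z - w‖ ^ 2)) ∂μ) < ⊤) ∧
        (⨆ z : EuclideanSpace ℂ (Fin n), μ (ball z δ)) ≤
          c * ⨆ z : EuclideanSpace ℂ (Fin n),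
            ∫⁻ w, ENNReal.ofReal (Real.exp (-α * ‖z - w‖ ^ 2)) ∂μ ∧
        (⨆ z : EuclideanSpace ℂ (Fin n),
            ∫⁻ w, ENNReal.ofReal (Real.exp (-α * ‖z - w‖ ^ 2)) ∂μ) ≤
          C * ⨆ z : EuclideanSpace ℂ (Fin n), μ (ball z δ) := by
  set C₀ : ℝ≥0∞ := ENNReal.ofReal (Real.exp (α * δ ^ 2)) *
    (∫⁻ x : EuclideanSpace ℂ (Fin n), ENNReal.ofReal (Real.exp (-(α / 2) * ‖x‖ ^ 2))) /
      volume (ball (0 : EuclideanSpace ℂ (Fin n)) δ)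
  have hC₀ : C₀ ≠ ⊤ := ENNReal.div_ne_top (ENNReal.mul_ne_top ENNReal.ofReal_ne_top
    (integrable_exp_neg_mul_sq_norm volume (half_pos hα)).lintegral_lt_top.ne)
    (measure_ball_pos volume 0 hδ).ne'
  refine ⟨(Real.exp (α * δ ^ 2)).toNNReal, C₀.toNNReal + 1, by positivity, by positivity,
    fun μ => ?_⟩
  have hle : (⨆ z, μ (ball z δ)) ≤ (Real.exp (α * δ ^ 2)).toNNReal *
      ⨆ z, ∫⁻ w, ENNReal.ofReal (Real.exp (-α * ‖z - w‖ ^ 2)) ∂μ :=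
    iSup_measure_ball_le_exp_mul_iSup_lintegral μ hα.le δ
  have hge : (⨆ z, ∫⁻ w, ENNReal.ofReal (Real.exp (-α * ‖z - w‖ ^ 2)) ∂μ) ≤
      ((C₀.toNNReal + 1 : ℝ≥0) : ℝ≥0∞) * ⨆ z, μ (ball z δ) := by
    rcases eq_top_or_lt_top (⨆ z, μ (ball z δ)) with htop | hfin
    · simp [htop]
    · have := isLocallyFiniteMeasure_of_iSup_measure_ball_lt_top hδ hfin
      refine (iSup_lintegral_gaussian_le μ volume hα.le hδ).trans (mul_le_mul_left ?_ _)
      rw [ENNReal.coe_add, ENNReal.coe_toNNReal hC₀]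
      exact le_self_add
  exact ⟨⟨fun h => hge.trans_lt (ENNReal.mul_lt_top ENNReal.coe_lt_top h),
    fun h => hle.trans_lt (ENNReal.mul_lt_top ENNReal.coe_lt_top h)⟩, hle, hge⟩
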